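/- Let K be a compact metric space, F : K → ℝ the pointwise limit of a sequence (fₙ) ⊆ C(K), and suppose K_m(F; a, b) ≠ ∅ for some m ∈ ℕ and a < b, where K₀ = K and K_{α+1}(F;a,b) = closure(K_α ∩ [F ≤ a]) ∩ closure(K_α ∩ [F ≥ b]). Then for any a < a' < b' < b there exist indices n₁ < n₂ < ⋯ < n_m such that the pairs of sets (A_{n_i}, B_{n_i})ᵢ₌₁^m are Boolean independent, where A_{n_i} = [f_{n_i} ≤ a'] and B_{n_i} = [f_{n_i} ≥ b']. -/
import Mathlib


open Filter

/-- The separation derived sets `K_i(F; a, b)` (finite stages). -/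
def sepDerivedSet {K : Type*} [TopologicalSpace K] (F : K → ℝ) (a b : ℝ) : ℕ → Set K
  | 0 => Set.univ
  | i + 1 => closure (sepDerivedSet F a b i ∩ {k | F k ≤ a}) ∩
      closure (sepDerivedSet F a b i ∩ {k | b ≤ F k})

lemma stmt10_aux {K : Type*} [MetricSpace K] [CompactSpace K] (F : K → ℝ)
    (f : ℕ → K → ℝ) (hf : ∀ n, Continuous (f n))
    (hlim : ∀ k, Tendsto (fun n => f n k) atTop (nhds (F k)))
    (m : ℕ) (a b : ℝ) (hne : (sepDerivedSet F a b m).Nonempty)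
    (a' b' : ℝ) (h1 : a < a') (h3 : b' < b) :
    ∀ j, j ≤ m → ∃ ns : Fin j → ℕ, StrictMono ns ∧ ∃ x : (Fin j → Bool) → K,
      ∀ s, x s ∈ sepDerivedSet F a b (m - j) ∧
        ∀ i, (s i = true → f (ns i) (x s) < a') ∧ (s i = false → b' < f (ns i) (x s)) := by
  intro j
  induction j with
  | zero =>
    intro _
    exact ⟨Fin.elim0, fun i => i.elim0, fun _ => hne.choose,
      fun s => ⟨hne.choose_spec, fun i => i.elim0⟩⟩
  | succ j ih =>
    intro hj
    obtain ⟨ns, hmono, x, hx⟩ := ih (Nat.le_of_succ_le hj)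
    have hmsub : m - j = (m - (j + 1)) + 1 := by omega
    set U : (Fin j → Bool) → Set K := fun s =>
      {k | ∀ i, (s i = true → f (ns i) k < a') ∧ (s i = false → b' < f (ns i) k)} with hU
    have hUopen : ∀ s, IsOpen (U s) := by
      intro s
      have : U s = ⋂ i, {k | (s i = true → f (ns i) k < a') ∧ (s i = false → b' < f (ns i) k)} := by
        ext k; simp [hU, Set.mem_iInter]
      rw [this]
      apply isOpen_iInter_of_finite
      intro i
      cases h : s i with
      | true =>
        have heq : {k : K | (true = true → f (ns i) k < a') ∧ (true = false → b' < f (ns i) k)}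
            = {k : K | f (ns i) k < a'} := by
          ext k; simp
        rw [heq]
        exact isOpen_lt (hf (ns i)) continuous_const
      | false =>
        have heq : {k : K | (false = true → f (ns i) k < a') ∧ (false = false → b' < f (ns i) k)}
            = {k : K | b' < f (ns i) k} := by
          ext k; simp
        rw [heq]
        exact isOpen_lt continuous_const (hf (ns i))
    have hxU : ∀ s, x s ∈ U s := fun s => (hx s).2
    have hxc : ∀ s, x s ∈ closure (sepDerivedSet F a b (m - (j+1)) ∩ {k | F k ≤ a}) ∩
        closure (sepDerivedSet F a b (m - (j+1)) ∩ {k | b ≤ F k}) := by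
      intro s
      have h := (hx s).1
      rw [hmsub] at h
      exact h
    have hy : ∀ s, ∃ y, y ∈ sepDerivedSet F a b (m - (j+1)) ∧ F y ≤ a ∧ y ∈ U s := by
      intro s
      obtain ⟨y, hyU, hyS, hya⟩ := mem_closure_iff.mp (hxc s).1 (U s) (hUopen s) (hxU s)
      exact ⟨y, hyS, hya, hyU⟩
    have hz : ∀ s, ∃ z, z ∈ sepDerivedSet F a b (m - (j+1)) ∧ b ≤ F z ∧ z ∈ U s := by
      intro s
      obtain ⟨z, hzU, hzS, hzb⟩ := mem_closure_iff.mp (hxc s).2 (U s) (hUopen s) (hxU s)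
      exact ⟨z, hzS, hzb, hzU⟩
    choose y hyS hya hyU using hy
    choose z hzS hzb hzU using hz
    have hev : ∀ᶠ n in atTop, (∀ s, f n (y s) < a' ∧ b' < f n (z s)) ∧ ∀ i, ns i < n := by
      refine Filter.Eventually.and ?_ ?_
      · rw [Filter.eventually_all]
        intro s
        refine Filter.Eventually.and ?_ ?_
        · exact (hlim (y s)).eventually_lt_const (lt_of_le_of_lt (hya s) h1)
        · exact (hlim (z s)).eventually_const_lt (lt_of_lt_of_le h3 (hzb s))
      · rw [Filter.eventually_all]
        intro i
        exact Filter.eventually_gt_atTop (ns i)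
    obtain ⟨N, hN1, hN2⟩ := hev.exists
    have hmono' : StrictMono (Fin.snoc ns N : Fin (j+1) → ℕ) := by
      intro p q hpq
      induction q using Fin.lastCases with
      | last =>
        rw [Fin.snoc_last]
        induction p using Fin.lastCases with
        | last => exact absurd hpq (lt_irrefl _)
        | cast p' =>
          rw [Fin.snoc_castSucc]
          exact hN2 p'
      | cast q' =>
        induction p using Fin.lastCases with
        | last => exact absurd hpq (Fin.castSucc_lt_last q').asymm
        | cast p' =>
          rw [Fin.snoc_castSucc, Fin.snoc_castSucc]
          exact hmono (Fin.castSucc_lt_castSucc_iff.mp hpq)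
    classical
    refine ⟨Fin.snoc ns N, hmono',
      fun s => if s (Fin.last j) = true then y (s ∘ Fin.castSucc) else z (s ∘ Fin.castSucc), ?_⟩
    intro s
    constructor
    · by_cases h : s (Fin.last j) = true
      · simp only [h, if_true]
        exact hyS _
      · simp only [h, if_false]
        exact hzS _
    · intro i
      refine Fin.lastCases ?_ (fun i' => ?_) i
      · rw [Fin.snoc_last]
        constructor
        · intro hlast
          simp only [hlast, if_true]
          exact (hN1 _).1
        · intro hlast
          simp only [hlast, Bool.false_eq_true, if_false]
          exact (hN1 _).2
      · rw [Fin.snoc_castSucc]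
        by_cases h : s (Fin.last j) = true
        · simp only [h, if_true]
          exact hyU (s ∘ Fin.castSucc) i'
        · simp only [h, if_false]
          exact hzU (s ∘ Fin.castSucc) i'

/-- If `F` is the pointwise limit of `(fₙ) ⊆ C(K)` and
`K_m(F; a, b) ≠ ∅`, then for `a < a' < b' < b` there exist `n₁ < ⋯ < n_m` such that
the pairs `([f_{n_i} ≤ a'], [f_{n_i} ≥ b'])ᵢ` are Boolean independent. -/
theorem stmt10 {K : Type*} [MetricSpace K] [CompactSpace K] (F : K → ℝ)
    (f : ℕ → K → ℝ) (hf : ∀ n, Continuous (f n))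
    (hlim : ∀ k, Tendsto (fun n => f n k) atTop (nhds (F k)))
    (m : ℕ) (a b : ℝ) (hab : a < b) (hne : (sepDerivedSet F a b m).Nonempty)
    (a' b' : ℝ) (h1 : a < a') (h2 : a' < b') (h3 : b' < b) :
    ∃ ns : Fin m → ℕ, StrictMono ns ∧
      ∀ I : Set (Fin m),
        ((⋂ i ∈ I, {k | f (ns i) k ≤ a'}) ∩ ⋂ i ∈ Iᶜ, {k | b' ≤ f (ns i) k}).Nonempty := by
  classical
  obtain ⟨ns, hmono, x, hx⟩ := stmt10_aux F f hf hlim m a b hne a' b' h1 h3 m le_rfl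
  refine ⟨ns, hmono, fun I => ?_⟩
  refine ⟨x (fun i => decide (i ∈ I)), ?_, ?_⟩
  · rw [Set.mem_iInter₂]
    intro i hi
    exact le_of_lt (((hx _).2 i).1 (decide_eq_true hi))
  · rw [Set.mem_iInter₂]
    intro i hi
    exact le_of_lt (((hx _).2 i).2 (decide_eq_false hi))
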